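/- arXiv:2107.12870 — 2 statements merged into one kernel-verified Lean document; each statement's English description precedes it below -/
import Mathlib

section
/- Every free and fair economy admits a pure strategy Nash equilibrium. That is, in any finite strategic form game where payoffs are given by the Shapley pay scheme applied to a production function, there exists a strategy profile x* such that for every player i and every y_i in X_i, u_i(x*) ≥ u_i(x*_{-i}, y_i). -/
open Finset

noncomputable section

variable {ι : Type*}

/-- Sub-profile of `x` relative to the reference profile `o`:
agents in `S` play their `x`-coordinate, all others play their reference action. -/
def subp [DecidableEq ι] {X : ι → Type*} (o x : ∀ i, X i) (S : Finset ι) : ∀ i, X i :=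
  fun j => if j ∈ S then x j else o j

/-- The set of active agents at profile `x` (those deviating from the reference `o`). -/
def active [DecidableEq ι] [Fintype ι] {X : ι → Type*} [∀ i, DecidableEq (X i)]
    (o x : ∀ i, X i) : Finset ι :=
  Finset.univ.filter fun j => x j ≠ o j

/-- The multivariate Shapley pay scheme. -/
def Sh [DecidableEq ι] [Fintype ι] {X : ι → Type*} [∀ i, DecidableEq (X i)]
    (o : ∀ i, X i) (f : (∀ i, X i) → ℝ) (i : ι) (x : ∀ i, X i) : ℝ :=
  ∑ S ∈ ((active o x).erase i).powerset,
    ((S.card.factorial * ((active o x).card - S.card - 1).factorial : ℝ) /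
        ((active o x).card.factorial)) *
      (f (subp o x (insert i S)) - f (subp o x S))

end

/-!
The Shapley pay scheme admits an exact potential. At a profile `x` with active set `A`, the
coalitional game `S ↦ f (subp o x S)` has the Hart–Mas-Colell potential
`P(x) = ∑_{S ⊆ A} (|S|-1)! (|A|-|S|)! / |A|! · (f (subp o x S) - f o)`, and agent `i`'s Shapley
payoff is `P(x) - P(x_{-i}, o_i)`. The second term does not depend on `x_i`, so a unilateral
deviation changes the deviator's payoff exactly as it changes `P`, and a maximiser of `P` over the
finite set of profiles is a pure Nash equilibrium.
-/

open Nat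

noncomputable section CoalitionalGame

variable {ι : Type*}

def shapleyValue [DecidableEq ι] (v : Finset ι → ℝ) (A : Finset ι) (i : ι) : ℝ :=
  ∑ S ∈ (A.erase i).powerset,
    ((S.card ! * (A.card - S.card - 1)! : ℝ) / A.card !) * (v (insert i S) - v S)

/-- The Hart–Mas-Colell potential of the game `v` on the player set `A`. Normalising by `v ∅`
makes the junk weight `(0 - 1)! = 1` of the empty coalition harmless. -/
def shapleyPotential (v : Finset ι → ℝ) (A : Finset ι) : ℝ :=
  ∑ S ∈ A.powerset,
    (((S.card - 1)! * (A.card - S.card)! : ℝ) / A.card !) * (v S - v ∅)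

theorem shapleyPotential_congr {v w : Finset ι → ℝ} {A : Finset ι}
    (h : ∀ S ⊆ A, v S = w S) : shapleyPotential v A = shapleyPotential w A := by
  refine sum_congr rfl fun S hS => ?_
  rw [h S (mem_powerset.mp hS), h ∅ (empty_subset A)]

/- For a coalition of size `a + 1` in a player set of size `a + k + 2`: the potential weight
minus the potential weight after removing one outside player is minus the Shapley weight. -/
theorem shapleyPotential_weight_sub (a k : ℕ) :
    (a ! * (k + 1)! : ℝ) / (a + k + 2)! - a ! * k ! / (a + k + 1)!
      = -((a + 1)! * k ! / (a + k + 2)!) := by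
  have hfac : ((a + k + 1)! : ℝ) ≠ 0 := by exact_mod_cast factorial_ne_zero _
  rw [show a + k + 2 = (a + k + 1) + 1 from rfl]
  simp only [factorial_succ, cast_mul, cast_add, cast_one]
  field_simp
  ring

theorem shapleyValue_insert_eq_sub [DecidableEq ι] (v : Finset ι → ℝ) {B : Finset ι} {i : ι}
    (hi : i ∉ B) :
    shapleyValue v (insert i B) i = shapleyPotential v (insert i B) - shapleyPotential v B := by
  rw [shapleyValue, shapleyPotential, shapleyPotential, erase_insert hi,
    sum_powerset_insert hi, ← sum_add_distrib, ← sum_sub_distrib]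
  refine sum_congr rfl fun S hS => ?_
  have hSB : S ⊆ B := mem_powerset.mp hS
  have hiS : i ∉ S := fun h => hi (hSB h)
  rw [card_insert_of_notMem hi, card_insert_of_notMem hiS]
  rcases S.eq_empty_or_nonempty with rfl | hne
  · simp
  obtain ⟨a, ha⟩ : ∃ a, S.card = a + 1 := ⟨S.card - 1, by have := hne.card_pos; omega⟩
  obtain ⟨k, hk⟩ : ∃ k, B.card = a + k + 1 :=
    ⟨B.card - S.card, by have := card_le_card hSB; omega⟩
  rw [ha, hk, show a + k + 1 + 1 = a + k + 2 from rfl]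
  simp only [add_tsub_cancel_right, show a + k + 2 - (a + 1) = k + 1 by omega,
    show a + k + 2 - (a + 1 + 1) = k by omega, show a + k + 1 - (a + 1) = k by omega]
  linear_combination (v ∅ - v S) * shapleyPotential_weight_sub a k

end CoalitionalGame

noncomputable section ShapleyPayScheme

variable {ι : Type*} [DecidableEq ι] [Fintype ι] {X : ι → Type*} [∀ i, DecidableEq (X i)]
  (o : ∀ i, X i)

theorem mem_active {x : ∀ i, X i} {j : ι} : j ∈ active o x ↔ x j ≠ o j := by
  simp [active]

theorem active_update_self (x : ∀ i, X i) (i : ι) :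
    active o (Function.update x i (o i)) = (active o x).erase i := by
  ext j
  rcases eq_or_ne j i with rfl | hj
  · simp [mem_active]
  · simp [mem_active, hj]

omit [Fintype ι] [∀ i, DecidableEq (X i)] in
theorem subp_insert_of_eq {x : ∀ i, X i} {i : ι} (h : x i = o i) (S : Finset ι) :
    subp o x (insert i S) = subp o x S := by
  funext j
  rcases eq_or_ne j i with rfl | hj
  · simp [subp, h]
  · simp [subp, hj]

omit [Fintype ι] [∀ i, DecidableEq (X i)] in
theorem subp_update_self_of_notMem (x : ∀ i, X i) {i : ι} {S : Finset ι} (h : i ∉ S) :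
    subp o (Function.update x i (o i)) S = subp o x S := by
  funext j
  by_cases hj : j ∈ S
  · simp [subp, hj, Function.update_of_ne (ne_of_mem_of_not_mem hj h)]
  · simp [subp, hj]

theorem Sh_eq_shapleyValue (f : (∀ i, X i) → ℝ) (i : ι) (x : ∀ i, X i) :
    Sh o f i x = shapleyValue (fun S => f (subp o x S)) (active o x) i :=
  rfl

def shPotential (f : (∀ i, X i) → ℝ) (x : ∀ i, X i) : ℝ :=
  shapleyPotential (fun S => f (subp o x S)) (active o x)

theorem Sh_eq_shPotential_sub (f : (∀ i, X i) → ℝ) (i : ι) (x : ∀ i, X i) :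
    Sh o f i x = shPotential o f x - shPotential o f (Function.update x i (o i)) := by
  by_cases hi : x i = o i
  · rw [← hi, Function.update_eq_self, sub_self, Sh]
    exact sum_eq_zero fun S _ => by rw [subp_insert_of_eq o hi, sub_self, mul_zero]
  have hA : active o x = insert i ((active o x).erase i) :=
    (insert_erase (mem_active o |>.mpr hi)).symm
  rw [Sh_eq_shapleyValue, shPotential, shPotential, active_update_self, hA,
    shapleyValue_insert_eq_sub _ (notMem_erase i _), erase_insert (notMem_erase i _)]
  congr 1
  exact shapleyPotential_congr fun S hS =>
    (congrArg f (subp_update_self_of_notMem o x fun h => notMem_erase i _ (hS h))).symm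

end ShapleyPayScheme

theorem exists_nash_of_potential {ι : Type*} [DecidableEq ι] {X : ι → Type*}
    [Finite (∀ i, X i)] [Nonempty (∀ i, X i)] (u : ι → (∀ i, X i) → ℝ)
    (P : (∀ i, X i) → ℝ)
    (hP : ∀ i x y, u i (Function.update x i y) - u i x = P (Function.update x i y) - P x) :
    ∃ xs : ∀ i, X i, ∀ i y, u i (Function.update xs i y) ≤ u i xs := by
  obtain ⟨xs, hxs⟩ := Finite.exists_max P
  exact ⟨xs, fun i y => sub_nonpos.mp ((hP i xs y).trans_le (sub_nonpos.mpr (hxs _)))⟩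

theorem stmt_1_general {ι : Type*} [DecidableEq ι] [Fintype ι] {X : ι → Type*}
    [∀ i, Fintype (X i)] [∀ i, DecidableEq (X i)]
    (o : ∀ i, X i) (f : (∀ i, X i) → ℝ) :
    ∃ xs : ∀ i, X i, ∀ i : ι, ∀ y : X i,
      Sh o f i (Function.update xs i y) ≤ Sh o f i xs := by
  have : Nonempty (∀ i, X i) := ⟨o⟩
  refine exists_nash_of_potential (Sh o f) (shPotential o f) fun i x y => ?_
  rw [Sh_eq_shPotential_sub, Sh_eq_shPotential_sub, Function.update_idem]
  ring

/-- Every free and fair economy admits a pure strategy Nash equilibrium. -/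
theorem stmt_1 {ι : Type*} [DecidableEq ι] [Fintype ι] {X : ι → Type*}
    [∀ i, Fintype (X i)] [∀ i, DecidableEq (X i)]
    (o : ∀ i, X i) (f : (∀ i, X i) → ℝ) (hf : f o = 0) :
    ∃ xs : ∀ i, X i, ∀ i : ι, ∀ y : X i,
      Sh o f i (Function.update xs i y) ≤ Sh o f i xs :=
  stmt_1_general o f
end

section
/- In a game with egalitarian Shapley payoffs ES^α, the sum of excess payoffs along any cycle of unilateral deviations equals zero, for every α ∈ [0,1]. -/
open Finset

noncomputable section

/-- The egalitarian Shapley pay scheme with meritocratic weight `α`. -/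
def ES {ι : Type*} [DecidableEq ι] [Fintype ι] {X : ι → Type*} [∀ i, DecidableEq (X i)]
    (α : ℝ) (o : ∀ i, X i) (f : (∀ i, X i) → ℝ) (i : ι) (x : ∀ i, X i) : ℝ :=
  α * Sh o f i x + (1 - α) * f x / (Fintype.card ι)

end

noncomputable section

def pot {ι : Type*} [DecidableEq ι] [Fintype ι] {X : ι → Type*} [∀ i, DecidableEq (X i)]
    (o : ∀ i, X i) (f : (∀ i, X i) → ℝ) (x : ∀ i, X i) : ℝ :=
  ∑ S ∈ (active o x).powerset,
    (((S.card - 1).factorial * ((active o x).card - S.card).factorial : ℝ) /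
      ((active o x).card.factorial)) * f (subp o x S)

lemma subp_empty {ι : Type*} [DecidableEq ι] {X : ι → Type*} (o x : ∀ i, X i) :
    subp o x ∅ = o := funext fun j => by simp [subp]

lemma fact_id (s t : ℕ) :
    ((s.factorial * (t+1).factorial : ℝ) / ((s+t+2).factorial))
      - ((s.factorial * t.factorial : ℝ) / ((s+t+1).factorial))
      + (((s+1).factorial * t.factorial : ℝ) / ((s+t+2).factorial)) = 0 := by
  have h2 : (s+t+2).factorial = (s+t+2) * (s+t+1).factorial := Nat.factorial_succ _
  have h3 : (t+1).factorial = (t+1) * t.factorial := Nat.factorial_succ _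
  have h4 : (s+1).factorial = (s+1) * s.factorial := Nat.factorial_succ _
  have ha : ((s+t+1).factorial : ℝ) ≠ 0 := by
    exact_mod_cast Nat.factorial_ne_zero _
  have hb : ((t).factorial : ℝ) ≠ 0 := by exact_mod_cast Nat.factorial_ne_zero _
  have hc : ((s).factorial : ℝ) ≠ 0 := by exact_mod_cast Nat.factorial_ne_zero _
  rw [h2, h3, h4]
  push_cast
  field_simp
  ring

lemma Sh_eq_pot_sub {ι : Type*} [DecidableEq ι] [Fintype ι] {X : ι → Type*}
    [∀ i, DecidableEq (X i)]
    (o : ∀ i, X i) (f : (∀ i, X i) → ℝ) (hf : f o = 0) (i : ι) (x : ∀ i, X i) :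
    Sh o f i x = pot o f x - pot o f (Function.update x i (o i)) := by
  by_cases h : x i = o i
  · have hz : Function.update x i (o i) = x := by rw [← h, Function.update_eq_self]
    rw [hz, sub_self, Sh]
    apply Finset.sum_eq_zero
    intro S hS
    have hiS : i ∉ S := fun hmem =>
      (Finset.mem_erase.mp (Finset.mem_powerset.mp hS hmem)).1 rfl
    have : subp o x (insert i S) = subp o x S := by
      funext m
      by_cases hm : m = i
      · subst hm; simp [subp, hiS, h]
      · simp [subp, Finset.mem_insert, hm]
    rw [this, sub_self, mul_zero]
  · -- i is active
    have hiA : i ∈ active o x := by simp [active, h]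
    set A' : Finset ι := (active o x).erase i with hA'
    have hins : insert i A' = active o x := Finset.insert_erase hiA
    have hiA' : i ∉ A' := Finset.notMem_erase i _
    set z := Function.update x i (o i) with hzdef
    have hactz : active o z = A' := by
      ext m
      by_cases hm : m = i
      · subst hm; simp [active, hzdef, Function.update_self, hA']
      · simp [active, hzdef, Function.update_of_ne hm, hA', Finset.mem_erase, hm]
    have hsubz : ∀ S ∈ A'.powerset, subp o z S = subp o x S := by
      intro S hS
      have hiS : i ∉ S := fun hmem => hiA' (Finset.mem_powerset.mp hS hmem)
      funext m
      by_cases hm : m ∈ S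
      · have : m ≠ i := fun e => hiS (e ▸ hm)
        simp [subp, hm, hzdef, Function.update_of_ne this]
      · simp [subp, hm]
    have hcard : (active o x).card = A'.card + 1 := by
      rw [← hins, Finset.card_insert_of_notMem hiA']
    -- expand pot x via insert decomposition
    have hpotx : pot o f x =
        (∑ S ∈ A'.powerset,
          (((S.card - 1).factorial * (A'.card + 1 - S.card).factorial : ℝ) /
            ((A'.card + 1).factorial)) * f (subp o x S))
        + ∑ S ∈ A'.powerset,
          ((S.card.factorial * (A'.card - S.card).factorial : ℝ) /
            ((A'.card + 1).factorial)) * f (subp o x (insert i S)) := by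
      rw [pot, ← hins, Finset.sum_powerset_insert hiA']
      congr 1
      · apply Finset.sum_congr rfl
        intro S hS
        rw [Finset.card_insert_of_notMem hiA']
      · apply Finset.sum_congr rfl
        intro S hS
        have hiS : i ∉ S := fun hmem => hiA' (Finset.mem_powerset.mp hS hmem)
        rw [Finset.card_insert_of_notMem hiS, Finset.card_insert_of_notMem hiA']
        have e1 : S.card + 1 - 1 = S.card := by omega
        have e2 : A'.card + 1 - (S.card + 1) = A'.card - S.card := by omega
        rw [e1, e2]
    have hpotz : pot o f z =
        ∑ S ∈ A'.powerset,
          (((S.card - 1).factorial * (A'.card - S.card).factorial : ℝ) /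
            (A'.card.factorial)) * f (subp o x S) := by
      rw [pot, hactz]
      exact Finset.sum_congr rfl fun S hS => by rw [hsubz S hS]
    have hSh : Sh o f i x =
        ∑ S ∈ A'.powerset,
          ((S.card.factorial * (A'.card - S.card).factorial : ℝ) /
            ((A'.card + 1).factorial)) *
          (f (subp o x (insert i S)) - f (subp o x S)) := by
      rw [Sh, hcard]
      apply Finset.sum_congr rfl
      intro S hS
      have e : A'.card + 1 - S.card - 1 = A'.card - S.card := by omega
      rw [e]
    rw [hSh, hpotx, hpotz]
    have hre : ∀ a b c : ℝ, a + b - c = (a - c) + b := fun _ _ _ => by ring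
    rw [hre, ← Finset.sum_sub_distrib, ← Finset.sum_add_distrib]
    apply Finset.sum_congr rfl
    intro S hS
    have hSle : S.card ≤ A'.card := Finset.card_le_card (Finset.mem_powerset.mp hS)
    rcases Nat.eq_zero_or_pos S.card with h0 | hpos
    · have hSe : S = ∅ := Finset.card_eq_zero.mp h0
      subst hSe
      rw [subp_empty, hf]
      simp
    · obtain ⟨s', hs'⟩ : ∃ s', S.card = s' + 1 := ⟨S.card - 1, by omega⟩
      obtain ⟨t, ht⟩ : ∃ t, A'.card = S.card + t := ⟨A'.card - S.card, by omega⟩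
      have e1 : S.card - 1 = s' := by omega
      have e2 : A'.card + 1 - S.card = t + 1 := by omega
      have e3 : A'.card - S.card = t := by omega
      have e4 : A'.card + 1 = s' + t + 2 := by omega
      have e5 : A'.card = s' + t + 1 := by omega
      rw [e1, e2, e3, e4, e5, hs']
      linear_combination (-(f (subp o x S))) * fact_id s' t

end

/-- With egalitarian Shapley payoffs, the sum of excess payoffs along
any cycle of unilateral deviations equals zero. -/
theorem stmt_9 {ι : Type*} [DecidableEq ι] [Fintype ι] {X : ι → Type*}
    [∀ i, Fintype (X i)] [∀ i, DecidableEq (X i)]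
    (o : ∀ i, X i) (f : (∀ i, X i) → ℝ) (hf : f o = 0)
    (α : ℝ) (hα0 : 0 ≤ α) (hα1 : α ≤ 1)
    (k : ℕ) (hk : 0 < k) (x : Fin (k + 1) → ∀ i, X i) (j : Fin k → ι)
    (hcyc : x (Fin.last k) = x 0)
    (hdev : ∀ l : Fin k, ∀ m : ι, m ≠ j l → x l.castSucc m = x l.succ m) :
    ∑ l : Fin k, (ES α o f (j l) (x l.succ) - ES α o f (j l) (x l.castSucc)) = 0 := by
  set Φ : (∀ i, X i) → ℝ :=
    fun y => α * pot o f y + (1 - α) * f y / (Fintype.card ι) with hΦ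
  have hstep : ∀ l : Fin k,
      ES α o f (j l) (x l.succ) - ES α o f (j l) (x l.castSucc)
        = Φ (x l.succ) - Φ (x l.castSucc) := by
    intro l
    have hupd : Function.update (x l.succ) (j l) (o (j l))
        = Function.update (x l.castSucc) (j l) (o (j l)) := by
      funext m
      by_cases hm : m = j l
      · subst hm; simp
      · rw [Function.update_of_ne hm, Function.update_of_ne hm, hdev l m hm]
    rw [ES, ES, Sh_eq_pot_sub o f hf, Sh_eq_pot_sub o f hf, hupd]
    simp only [hΦ]
    ring
  rw [Finset.sum_congr rfl fun l _ => hstep l]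
  set G : ℕ → ℝ := fun m => if h : m < k + 1 then Φ (x ⟨m, h⟩) else 0 with hG
  have hterm : ∀ l : Fin k,
      Φ (x l.succ) - Φ (x l.castSucc) = G (↑l + 1) - G ↑l := by
    intro l
    have h1 : (↑l + 1 : ℕ) < k + 1 := by omega
    have h2 : (↑l : ℕ) < k + 1 := by omega
    simp only [hG, dif_pos h1, dif_pos h2]
    rfl
  calc ∑ l : Fin k, (Φ (x l.succ) - Φ (x l.castSucc))
      = ∑ l : Fin k, (G (↑l + 1) - G ↑l) :=
        Finset.sum_congr rfl fun l _ => hterm l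
    _ = ∑ m ∈ Finset.range k, (G (m + 1) - G m) :=
        Fin.sum_univ_eq_sum_range (fun m => G (m + 1) - G m) k
    _ = G k - G 0 := Finset.sum_range_sub G k
    _ = 0 := by
        have h1 : k < k + 1 := by omega
        have h2 : 0 < k + 1 := by omega
        simp only [hG, dif_pos h1, dif_pos h2]
        show Φ (x (Fin.last k)) - Φ (x 0) = 0
        rw [hcyc, sub_self]
end
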